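/- For the flat Euclidean connection on ℝ² and any smooth (k-1,ℓ)-tensor field u (symmetric in its first k-1 and last ℓ slots, k,ℓ ≥ 1), there exists a smooth (k-1,ℓ-1)-tensor field w such that A(d^s u − d' u) = λ w, where d^s is the fully symmetrized derivative and d' symmetrizes only over the first k indices. -/

import Mathlib

open scoped BigOperators
open MeasureTheory

namespace MRT

/-- A multi-index with `n` slots, each ranging over the two coordinate indices of `ℝ²`
(`0` stands for the index "1", `1` stands for the index "2"). -/
abbrev Idx (n : ℕ) := Fin n → Fin 2

/-- A `(k,ℓ)`-tensor over `ℝ²`: a function of `k` first-group and `ℓ` second-group indices. -/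
abbrev Tens (k l : ℕ) := Idx k → Idx l → ℝ

/-- A tensor with `n` (fully interchangeable) slots. -/
abbrev Full (n : ℕ) := Idx n → ℝ

/-- The index swap `δ` exchanging the two coordinate indices. -/
def dswap : Fin 2 → Fin 2 := fun i => 1 - i

/-- `N J` : the number of entries of `J` equal to the first index ("1"). -/
def NJ {n : ℕ} (J : Idx n) : ℕ := (Finset.univ.filter fun j => J j = 0).card

/-- The operator `A`: `(Af)(I,J) = (-1)^(ℓ - N(J)) f(I, δ(J))`. -/
def opA {k l : ℕ} (f : Tens k l) : Tens k l :=
  fun I J => (-1 : ℝ) ^ (l - NJ J) * f I (dswap ∘ J)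

/-- Full symmetrization (average over all permutations of the `n` slots). -/
noncomputable def Sym {n : ℕ} (h : Full n) : Full n :=
  fun I => ((Nat.factorial n : ℝ))⁻¹ * ∑ σ : Equiv.Perm (Fin n), h (I ∘ σ)

/-- Symmetrization over the first index group only. -/
noncomputable def symK {k l : ℕ} (f : Tens k l) : Tens k l :=
  fun I J => ((Nat.factorial k : ℝ))⁻¹ * ∑ σ : Equiv.Perm (Fin k), f (I ∘ σ) J

/-- Symmetrization over the second index group only. -/
noncomputable def symL {k l : ℕ} (f : Tens k l) : Tens k l :=
  fun I J => ((Nat.factorial l : ℝ))⁻¹ * ∑ σ : Equiv.Perm (Fin l), f I (J ∘ σ)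

/-- View a `(k,ℓ)`-tensor as a `(k+ℓ)`-tensor. -/
def toFull {k l : ℕ} (f : Tens k l) : Full (k + l) :=
  fun I => f (fun i => I (Fin.castAdd l i)) (fun j => I (Fin.natAdd k j))

/-- View a `(k+ℓ)`-tensor as a `(k,ℓ)`-tensor. -/
def fromFull {k l : ℕ} (h : Full (k + l)) : Tens k l :=
  fun I J => h (Fin.append I J)

/-- The operator `λ` : symmetrized multiplication with the Euclidean metric `g = δ`. -/
noncomputable def lam {k l : ℕ} (w : Tens k l) : Tens (k + 1) (l + 1) :=
  symK (symL (fun I J =>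
    (if I 0 = J 0 then (1 : ℝ) else 0) * w (Fin.tail I) (Fin.tail J)))

/-- The contraction `v^I = v_{i₁} ⋯ v_{i_n}`. -/
def vpow {n : ℕ} (v : Fin 2 → ℝ) (I : Idx n) : ℝ := ∏ i, v (I i)

/-- The rotation `σ(v) = (v₂, -v₁)`. -/
def rot (v : Fin 2 → ℝ) : Fin 2 → ℝ := ![v 1, -v 0]

/-- Euclidean dot product on `ℝ²`. -/
def dot (x v : Fin 2 → ℝ) : ℝ := x 0 * v 0 + x 1 * v 1

/-- Symmetry in the first `k` and in the last `ℓ` index slots. -/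
def SymmIn {k l : ℕ} (f : Tens k l) : Prop :=
  ∀ (I : Idx k) (J : Idx l) (σ : Equiv.Perm (Fin k)) (τ : Equiv.Perm (Fin l)),
    f (I ∘ σ) (J ∘ τ) = f I J

/-- Smoothness of a tensor field on `ℝ²`, componentwise. -/
def SmoothT {k l : ℕ} (u : (Fin 2 → ℝ) → Tens k l) : Prop :=
  ∀ I J, ContDiff ℝ (⊤ : ℕ∞) fun x => u x I J

/-- The operator `d'` for the flat connection: symmetrized partial derivative placed in the
first index group. -/
noncomputable def dprime {k l : ℕ} (u : (Fin 2 → ℝ) → Tens k l) :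
    (Fin 2 → ℝ) → Tens (k + 1) l :=
  fun x => symK fun I J =>
    fderiv ℝ (fun y => u y (Fin.tail I) J) x (Pi.single (I 0) 1)

/-- The full (flat) covariant derivative of a field of `n`-tensors, derivative slot first. -/
noncomputable def dfull {n : ℕ} (h : (Fin 2 → ℝ) → Full n) :
    (Fin 2 → ℝ) → Full (n + 1) :=
  fun x I => fderiv ℝ (fun y => h y (Fin.tail I)) x (Pi.single (I 0) 1)

/-- The inner derivative `dˢ`: full symmetrization of the derivative, viewed as a
`(k+1,ℓ)`-tensor field. -/
noncomputable def dsym {k l : ℕ} (u : (Fin 2 → ℝ) → Tens k l) :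
    (Fin 2 → ℝ) → Tens (k + 1) l :=
  fun x I J =>
    Sym (dfull (fun y => toFull (u y)) x) (Fin.cons (I 0) (Fin.append (Fin.tail I) J))

/-- The symmetric tensor `(⊗^m dx¹) ⊗_s (⊗^(n-m) dx²)` (averaged symmetrization of the
elementary tensor product with `m` copies of `dx¹` followed by copies of `dx²`). -/
noncomputable def E (n m : ℕ) : Full n :=
  Sym fun I => if ∀ i : Fin n, (I i = 0 ↔ (i : ℕ) < m) then 1 else 0

/-- Membership in the closed unit disc. -/
def inDisc (x : Fin 2 → ℝ) : Prop := x 0 ^ 2 + x 1 ^ 2 ≤ 1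

/-- Membership in the unit circle (the boundary of the disc). -/
def onSphere (x : Fin 2 → ℝ) : Prop := x 0 ^ 2 + x 1 ^ 2 = 1

/-- Unit vectors of `ℝ²`. -/
def unitVec (v : Fin 2 → ℝ) : Prop := v 0 ^ 2 + v 1 ^ 2 = 1

/-- Exit time of the chord `t ↦ x + t v` of the unit disc, `x ∈ ∂D`, `‖v‖ = 1`. -/
noncomputable def tauD (x v : Fin 2 → ℝ) : ℝ := -2 * dot x v

/-- The mixed ray transform `L_{k,ℓ}` on the Euclidean unit disc. -/
noncomputable def Lray {k l : ℕ} (f : (Fin 2 → ℝ) → Tens k l) (x v : Fin 2 → ℝ) : ℝ :=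
  ∫ t in (0:ℝ)..tauD x v,
    ∑ I : Idx k, ∑ J : Idx l, f (x + t • v) I J * vpow v I * vpow (rot v) J

/-- The geodesic (X-ray) transform of a field of symmetric `n`-tensors on the unit disc. -/
noncomputable def Iray {n : ℕ} (h : (Fin 2 → ℝ) → Full n) (x v : Fin 2 → ℝ) : ℝ :=
  ∫ t in (0:ℝ)..tauD x v, ∑ I : Idx n, h (x + t • v) I * vpow v I


section Helpers
open Finset

lemma fin2_cases (c : Fin 2) : c = 0 ∨ c = 1 := by revert c; decide

lemma dswap_dswap (c : Fin 2) : dswap (dswap c) = c := by revert c; decide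

lemma NJ_le {n : ℕ} (J : Idx n) : NJ J ≤ n := by
  classical
  simpa [NJ] using (Finset.card_filter_le (Finset.univ : Finset (Fin n)) _)

lemma NJ_eq_sum {n : ℕ} (J : Idx n) : NJ J = ∑ i, if J i = 0 then 1 else 0 :=
  Finset.card_filter _ _

lemma NJ_comp_perm {n : ℕ} (J : Idx n) (σ : Equiv.Perm (Fin n)) : NJ (J ∘ σ) = NJ J := by
  simpa [NJ_eq_sum] using Equiv.sum_comp σ (fun i => if J i = 0 then (1:ℕ) else 0)

lemma NJ_cons {n : ℕ} (c : Fin 2) (K : Idx n) :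
    NJ (Fin.cons c K) = (if c = 0 then 1 else 0) + NJ K := by
  simp only [NJ_eq_sum, Fin.sum_univ_succ, Fin.cons_zero, Fin.cons_succ]

lemma NJ_append {m n : ℕ} (A : Idx m) (B : Idx n) :
    NJ (Fin.append A B) = NJ A + NJ B := by
  simp only [NJ_eq_sum, Fin.sum_univ_add, Fin.append_left, Fin.append_right]

lemma NJ_head_tail {n : ℕ} (I : Idx (n+1)) :
    NJ I = (if I 0 = 0 then 1 else 0) + NJ (Fin.tail I) := by
  have := NJ_cons (I 0) (Fin.tail I)
  rwa [Fin.cons_self_tail] at this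

lemma NJ_dswap {n : ℕ} (J : Idx n) : NJ (dswap ∘ J) = n - NJ J := by
  classical
  have h1 : (Finset.univ.filter fun j => (dswap ∘ J) j = 0)
      = Finset.univ.filter fun j => ¬ (J j = 0) := by
    apply Finset.filter_congr
    intro j _
    rcases fin2_cases (J j) with h | h <;> simp [h, dswap]
  have h2 := Finset.card_filter_add_card_filter_not
    (s := (Finset.univ : Finset (Fin n))) (p := fun j => J j = 0)
  simp only [Finset.card_univ, Fintype.card_fin] at h2
  rw [NJ, h1]
  simp only [NJ] at *
  omega

lemma vpow_comp_perm {n : ℕ} (v : Fin 2 → ℝ) (I : Idx n) (σ : Equiv.Perm (Fin n)) :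
    vpow v (I ∘ σ) = vpow v I := by
  simpa [vpow] using Equiv.prod_comp σ (fun i => v (I i))

lemma vpow_cons {n : ℕ} (v : Fin 2 → ℝ) (c : Fin 2) (K : Idx n) :
    vpow v (Fin.cons c K) = v c * vpow v K := by
  simp [vpow, Fin.prod_univ_succ]

lemma vpow_append {m n : ℕ} (v : Fin 2 → ℝ) (A : Idx m) (B : Idx n) :
    vpow v (Fin.append A B) = vpow v A * vpow v B := by
  simp [vpow, Fin.prod_univ_add]

lemma sum_idx_comp_perm {n : ℕ} (f : Idx n → ℝ) (σ : Equiv.Perm (Fin n)) :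
    ∑ I : Idx n, f (I ∘ σ) = ∑ I : Idx n, f I := by
  exact Fintype.sum_equiv (Equiv.arrowCongr σ.symm (Equiv.refl (Fin 2))) _ f (fun I => rfl)

lemma sum_perm_comp {n : ℕ} (f : Equiv.Perm (Fin n) → ℝ) (σ : Equiv.Perm (Fin n)) :
    ∑ π : Equiv.Perm (Fin n), f (σ * π) = ∑ π : Equiv.Perm (Fin n), f π := by
  exact Fintype.sum_equiv (Equiv.mulLeft σ) _ f (fun π => rfl)

lemma sum_idx_cons {n : ℕ} (f : Idx (n+1) → ℝ) :
    ∑ I : Idx (n+1), f I = ∑ c : Fin 2, ∑ K : Idx n, f (Fin.cons c K) := by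
  rw [← Equiv.sum_comp (Fin.consEquiv fun _ => Fin 2) f, Fintype.sum_prod_type]
  rfl

lemma sum_idx_append {m n : ℕ} (f : Idx (m+n) → ℝ) :
    ∑ K : Idx (m+n), f K = ∑ A : Idx m, ∑ B : Idx n, f (Fin.append A B) := by
  rw [← Equiv.sum_comp (Fin.appendEquiv m n) f, Fintype.sum_prod_type]
  rfl

lemma sum_perm_head {n : ℕ} (g : Fin (n+1) → ℝ) :
    ∑ σ : Equiv.Perm (Fin (n+1)), g (σ 0) = (n.factorial : ℝ) * ∑ p, g p := by
  rw [← Equiv.sum_comp (Equiv.Perm.decomposeFin.symm)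
    (fun σ : Equiv.Perm (Fin (n+1)) => g (σ 0)), Fintype.sum_prod_type]
  simp [Equiv.Perm.decomposeFin_symm_apply_zero, Finset.sum_const, Fintype.card_perm,
    Finset.mul_sum, mul_comm]

lemma sum_count {n : ℕ} (I : Idx n) (g : Fin 2 → ℝ) :
    ∑ p, g (I p) = (NJ I : ℝ) * g 0 + ((n - NJ I : ℕ) : ℝ) * g 1 := by
  classical
  rw [← Finset.sum_filter_add_sum_filter_not Finset.univ (fun p => I p = 0)]
  have h1 : ∀ p ∈ Finset.univ.filter (fun p => I p = 0), g (I p) = g 0 := by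
    intro p hp; rw [(Finset.mem_filter.mp hp).2]
  have h2 : ∀ p ∈ Finset.univ.filter (fun p => ¬ I p = 0), g (I p) = g 1 := by
    intro p hp
    rcases fin2_cases (I p) with h | h
    · exact absurd h (Finset.mem_filter.mp hp).2
    · rw [h]
  have hc := Finset.card_filter_add_card_filter_not
    (s := (Finset.univ : Finset (Fin n))) (p := fun p => I p = 0)
  simp only [Finset.card_univ, Fintype.card_fin] at hc
  rw [Finset.sum_congr rfl h1, Finset.sum_congr rfl h2, Finset.sum_const, Finset.sum_const]
  have : (Finset.univ.filter (fun p => ¬ I p = 0)).card = n - NJ I := by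
    rw [NJ] at *; omega
  rw [this]
  simp [NJ, nsmul_eq_mul]

lemma Sym_comp_perm {n : ℕ} (h : Full n) (K : Idx n) (π : Equiv.Perm (Fin n)) :
    Sym h (K ∘ π) = Sym h K := by
  simp only [Sym]
  congr 1
  calc ∑ σ : Equiv.Perm (Fin n), h ((K ∘ π) ∘ σ)
      = ∑ σ : Equiv.Perm (Fin n), h (K ∘ ⇑(π * σ)) := by
        apply Finset.sum_congr rfl
        intro σ _
        exact congrArg h (funext fun i => congrArg K (Equiv.Perm.mul_apply π σ i).symm)
    _ = ∑ σ : Equiv.Perm (Fin n), h (K ∘ σ) := sum_perm_comp (fun ρ => h (K ∘ ρ)) π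

lemma exists_comp_perm {n : ℕ} (I I' : Idx n) (h : NJ I = NJ I') :
    ∃ σ : Equiv.Perm (Fin n), I' = I ∘ σ := by
  classical
  have c1 : Fintype.card {i // I' i = 0} = Fintype.card {i // I i = 0} := by
    simp only [Fintype.card_subtype]
    exact h.symm
  have c2 : Fintype.card {i // ¬ I' i = 0} = Fintype.card {i // ¬ I i = 0} := by
    rw [Fintype.card_subtype_compl, Fintype.card_subtype_compl, c1]
  refine ⟨Equiv.subtypeCongr (Fintype.equivOfCardEq c1) (Fintype.equivOfCardEq c2), ?_⟩
  funext i
  by_cases hi : I' i = 0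
  · have : Equiv.subtypeCongr (Fintype.equivOfCardEq c1) (Fintype.equivOfCardEq c2) i
        = ((Fintype.equivOfCardEq c1) ⟨i, hi⟩ : Fin n) := by
      simp [Equiv.subtypeCongr, hi]
    simp only [Function.comp_apply, this]
    rw [hi, ((Fintype.equivOfCardEq c1) ⟨i, hi⟩).2]
  · have : Equiv.subtypeCongr (Fintype.equivOfCardEq c1) (Fintype.equivOfCardEq c2) i
        = ((Fintype.equivOfCardEq c2) ⟨i, hi⟩ : Fin n) := by
      simp [Equiv.subtypeCongr, hi]
    simp only [Function.comp_apply, this]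
    have h2 := ((Fintype.equivOfCardEq c2) ⟨i, hi⟩).2
    rcases fin2_cases (I' i) with h | h
    · exact absurd h hi
    · rcases fin2_cases (I ((Fintype.equivOfCardEq c2) ⟨i, hi⟩ : Fin n)) with h' | h'
      · exact absurd h' h2
      · rw [h, h']

lemma Sym_eq_of_NJ {n : ℕ} (h : Full n) {K K' : Idx n} (e : NJ K = NJ K') :
    Sym h K = Sym h K' := by
  obtain ⟨σ, rfl⟩ := exists_comp_perm K K' e
  exact (Sym_comp_perm h K σ).symm

end Helpers

section H2
open Finset

lemma sum_Sym_vpow {n : ℕ} (h : Full n) (v : Fin 2 → ℝ) :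
    ∑ K : Idx n, Sym h K * vpow v K = ∑ K : Idx n, h K * vpow v K := by
  have step : ∀ K : Idx n, Sym h K * vpow v K
      = (n.factorial : ℝ)⁻¹ * ∑ σ : Equiv.Perm (Fin n), h (K ∘ σ) * vpow v K := by
    intro K
    rw [Sym, mul_assoc, Finset.sum_mul]
  rw [Finset.sum_congr rfl (fun K _ => step K), ← Finset.mul_sum, Finset.sum_comm]
  have inner : ∀ σ : Equiv.Perm (Fin n),
      ∑ K : Idx n, h (K ∘ σ) * vpow v K = ∑ K : Idx n, h K * vpow v K := by
    intro σ
    have := sum_idx_comp_perm (fun K => h K * vpow v K) σ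
    simp only [vpow_comp_perm] at this
    exact this
  rw [Finset.sum_congr rfl (fun σ _ => inner σ), Finset.sum_const, Finset.card_univ,
    Fintype.card_perm, Fintype.card_fin, nsmul_eq_mul, ← mul_assoc,
    inv_mul_cancel₀ (by exact_mod_cast Nat.factorial_ne_zero n), one_mul]

def cI (n a : ℕ) : Idx n := fun i => if (i : ℕ) < a then 0 else 1

lemma NJ_cI {n a : ℕ} (h : a ≤ n) : NJ (cI n a) = a := by
  classical
  have h1 : (Finset.univ.filter fun i : Fin n => cI n a i = 0)
      = Finset.univ.filter fun i : Fin n => (i : ℕ) < a := by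
    apply Finset.filter_congr
    intro i _
    by_cases hia : (i : ℕ) < a <;> simp [cI, hia]
  rw [NJ, h1]
  rw [Finset.card_bij' (fun (i : Fin n) (hi : i ∈ Finset.univ.filter fun i : Fin n => (i:ℕ) < a)
        => (⟨(i : ℕ), (Finset.mem_filter.mp hi).2⟩ : Fin a))
      (fun (j : Fin a) (_ : j ∈ Finset.univ) => (⟨(j : ℕ), lt_of_lt_of_le j.2 h⟩ : Fin n))
      (fun i hi => Finset.mem_univ _)
      (fun j hj => Finset.mem_filter.mpr ⟨Finset.mem_univ _, j.2⟩)
      (fun i hi => rfl) (fun j hj => rfl)]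
  simp

lemma card_NJ (n a : ℕ) :
    ((Finset.univ.filter fun I : Idx n => NJ I = a)).card = n.choose a := by
  classical
  have key : ((Finset.univ.filter fun I : Idx n => NJ I = a)).card
      = (Finset.powersetCard a (Finset.univ : Finset (Fin n))).card := by
    apply Finset.card_bij'
      (i := fun (I : Idx n) (_ : I ∈ Finset.univ.filter fun I : Idx n => NJ I = a)
        => Finset.univ.filter fun j => I j = 0)
      (j := fun (s : Finset (Fin n)) (_ : s ∈ Finset.powersetCard a Finset.univ)
        => fun j => if j ∈ s then (0 : Fin 2) else 1)
    · intro I hI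
      exact Finset.mem_powersetCard.mpr ⟨Finset.subset_univ _, (Finset.mem_filter.mp hI).2⟩
    · intro s hs
      refine Finset.mem_filter.mpr ⟨Finset.mem_univ _, ?_⟩
      have : (Finset.univ.filter fun j => (if j ∈ s then (0:Fin 2) else 1) = 0) = s := by
        ext j
        by_cases hj : j ∈ s <;> simp [hj]
      rw [NJ, this]
      exact (Finset.mem_powersetCard.mp hs).2
    · intro I hI
      funext j
      by_cases hj : I j = 0
      · simp [hj]
      · rcases fin2_cases (I j) with h | h
        · exact absurd h hj
        · simp [hj, h]
    · intro s hs
      ext j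
      by_cases hj : j ∈ s <;> simp [hj]
  rw [key, Finset.card_powersetCard]
  simp

lemma sum_NJ_fiber {n : ℕ} (f : Idx n → ℝ) (g : ℕ → ℝ) (hf : ∀ I, f I = g (NJ I)) :
    ∑ I : Idx n, f I = ∑ a ∈ Finset.range (n+1), (n.choose a : ℝ) * g a := by
  classical
  have maps : ∀ I : Idx n, I ∈ (Finset.univ : Finset (Idx n)) → NJ I ∈ Finset.range (n+1) := by
    intro I _
    simp only [Finset.mem_range]
    have : NJ I ≤ n := by simpa [NJ] using (Finset.card_filter_le (Finset.univ : Finset (Fin n)) _)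
    omega
  rw [← Finset.sum_fiberwise_of_maps_to maps f]
  apply Finset.sum_congr rfl
  intro a _
  have : ∀ I ∈ Finset.univ.filter fun I : Idx n => NJ I = a, f I = g a := by
    intro I hI
    rw [hf I, (Finset.mem_filter.mp hI).2]
  rw [Finset.sum_congr rfl this, Finset.sum_const, card_NJ, nsmul_eq_mul]

noncomputable def wrec (K L : ℕ) (Fh : ℕ → ℕ → ℝ) : ℕ → ℕ → ℝ
  | 0, b => ((L:ℝ)+1) * Fh 0 b / (((L:ℝ)+1) - b)
  | (a+1), 0 => ((K:ℝ)+1) * Fh (a+1) 0 / (((K:ℝ)+1) - ((a:ℝ)+1))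
  | (a+1), (b+1) =>
      (((K:ℝ)+1) * ((L:ℝ)+1) * Fh (a+1) (b+1) - ((a:ℝ)+1)*((b:ℝ)+1) * wrec K L Fh a b)
        / (((K:ℝ) - a) * ((L:ℝ) - b))

lemma wrec_zero (K L : ℕ) (Fh : ℕ → ℕ → ℝ) {b : ℕ} (hb : b ≤ L) :
    (((L:ℝ)+1) - b) * wrec K L Fh 0 b = ((L:ℝ)+1) * Fh 0 b := by
  have hne : ((L:ℝ)+1) - b ≠ 0 := by
    have : (b:ℝ) ≤ L := by exact_mod_cast hb
    intro hc; nlinarith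
  simp only [wrec]
  field_simp

lemma wrec_succ_zero (K L : ℕ) (Fh : ℕ → ℕ → ℝ) {a : ℕ} (ha : a + 1 ≤ K) :
    (((K:ℝ)+1) - ((a:ℝ)+1)) * wrec K L Fh (a+1) 0 = ((K:ℝ)+1) * Fh (a+1) 0 := by
  have hne : ((K:ℝ)+1) - ((a:ℝ)+1) ≠ 0 := by
    have : (a:ℝ) + 1 ≤ K := by exact_mod_cast ha
    intro hc; nlinarith
  have hne' : (K:ℝ) - (a:ℝ) ≠ 0 := by intro hc; apply hne; linarith
  simp only [wrec]
  rw [show ((K:ℝ)+1) - ((a:ℝ)+1) = (K:ℝ) - a by ring]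
  exact mul_div_cancel₀ _ hne'

lemma wrec_succ_succ (K L : ℕ) (Fh : ℕ → ℕ → ℝ) {a b : ℕ} (ha : a + 1 ≤ K) (hb : b + 1 ≤ L) :
    ((K:ℝ) - a) * ((L:ℝ) - b) * wrec K L Fh (a+1) (b+1)
      = ((K:ℝ)+1) * ((L:ℝ)+1) * Fh (a+1) (b+1) - ((a:ℝ)+1)*((b:ℝ)+1) * wrec K L Fh a b := by
  have hne1 : (K:ℝ) - a ≠ 0 := by
    have : (a:ℝ) + 1 ≤ K := by exact_mod_cast ha
    intro hc; nlinarith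
  have hne2 : (L:ℝ) - b ≠ 0 := by
    have : (b:ℝ) + 1 ≤ L := by exact_mod_cast hb
    intro hc; nlinarith
  simp only [wrec]
  field_simp

lemma wrec_smooth (K L : ℕ) (Fh : (Fin 2 → ℝ) → ℕ → ℕ → ℝ)
    (hF : ∀ a b, ContDiff ℝ (⊤ : ℕ∞) (fun x => Fh x a b)) :
    ∀ a b, ContDiff ℝ (⊤ : ℕ∞) (fun x => wrec K L (Fh x) a b) := by
  intro a
  induction a with
  | zero =>
    intro b
    simp only [wrec]
    exact (contDiff_const.mul (hF 0 b)).div_const _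
  | succ a ih =>
    intro b
    cases b with
    | zero =>
      simp only [wrec]
      exact (contDiff_const.mul (hF (a+1) 0)).div_const _
    | succ b =>
      simp only [wrec]
      exact ((contDiff_const.mul (hF (a+1) (b+1))).sub
        (contDiff_const.mul (ih b))).div_const _

lemma neg_one_pow_sub {n b : ℕ} (h : b ≤ n) :
    ((-1:ℝ))^(n-b) = (-1:ℝ)^n * (-1:ℝ)^b := by
  have h1 : ((-1:ℝ))^(n-b) * (-1:ℝ)^b = (-1:ℝ)^n := by
    rw [← pow_add, Nat.sub_add_cancel h]
  have h2 : ((-1:ℝ))^b * (-1:ℝ)^b = 1 := by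
    rw [← pow_add, ← two_mul, pow_mul]
    norm_num
  calc ((-1:ℝ))^(n-b) = ((-1:ℝ))^(n-b) * (((-1:ℝ))^b * (-1:ℝ)^b) := by rw [h2, mul_one]
    _ = (((-1:ℝ))^(n-b) * (-1:ℝ)^b) * (-1:ℝ)^b := by ring
    _ = (-1:ℝ)^n * (-1:ℝ)^b := by rw [h1]

end H2

section Stage2
open Finset

lemma contDiff_fderiv_apply {f : (Fin 2 → ℝ) → ℝ} (hf : ContDiff ℝ (⊤ : ℕ∞) f) (v : Fin 2 → ℝ) :
    ContDiff ℝ (⊤ : ℕ∞) fun x => fderiv ℝ f x v := by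
  have h1 : ContDiff ℝ (⊤ : ℕ∞) (fderiv ℝ f) := hf.fderiv_right (by simp)
  exact (ContinuousLinearMap.apply ℝ ℝ v).contDiff.comp h1

lemma smooth_dsym {k l : ℕ} (u : (Fin 2 → ℝ) → Tens k l) (hu : SmoothT u)
    (I : Idx (k+1)) (J : Idx l) : ContDiff ℝ (⊤ : ℕ∞) fun x => dsym u x I J := by
  simp only [dsym, dfull, Sym]
  apply ContDiff.mul contDiff_const
  apply ContDiff.sum
  intro σ _
  exact contDiff_fderiv_apply (hu _ _) _

lemma smooth_dprime {k l : ℕ} (u : (Fin 2 → ℝ) → Tens k l) (hu : SmoothT u)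
    (I : Idx (k+1)) (J : Idx l) : ContDiff ℝ (⊤ : ℕ∞) fun x => dprime u x I J := by
  simp only [dprime, symK]
  apply ContDiff.mul contDiff_const
  apply ContDiff.sum
  intro σ _
  exact contDiff_fderiv_apply (hu _ _) _

lemma dsym_perm {k l : ℕ} (u : (Fin 2 → ℝ) → Tens k l) (x : Fin 2 → ℝ)
    (I : Idx (k+1)) (J : Idx l) (σ : Equiv.Perm (Fin (k+1))) (τ : Equiv.Perm (Fin l)) :
    dsym u x (I ∘ σ) (J ∘ τ) = dsym u x I J := by
  simp only [dsym]
  apply Sym_eq_of_NJ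
  have e1 := NJ_head_tail (I ∘ σ)
  have e2 := NJ_head_tail I
  rw [NJ_cons, NJ_cons, NJ_append, NJ_append, NJ_comp_perm J τ]
  rw [NJ_comp_perm I σ] at e1
  omega

lemma dprime_perm {k l : ℕ} (u : (Fin 2 → ℝ) → Tens k l) (hsym : ∀ x, SymmIn (u x))
    (x : Fin 2 → ℝ)
    (I : Idx (k+1)) (J : Idx l) (σ : Equiv.Perm (Fin (k+1))) (τ : Equiv.Perm (Fin l)) :
    dprime u x (I ∘ σ) (J ∘ τ) = dprime u x I J := by
  simp only [dprime, symK]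
  congr 1
  have step1 : ∀ π : Equiv.Perm (Fin (k+1)),
      (fun y => u y (Fin.tail (I ∘ π)) (J ∘ τ)) = (fun y => u y (Fin.tail (I ∘ π)) J) := by
    intro π
    funext y
    have h := hsym y (Fin.tail (I ∘ π)) J 1 τ
    simpa using h
  calc ∑ σ' : Equiv.Perm (Fin (k+1)),
        fderiv ℝ (fun y => u y (Fin.tail ((I ∘ σ) ∘ σ')) (J ∘ τ)) x (Pi.single (((I ∘ σ) ∘ σ') 0) 1)
      = ∑ σ' : Equiv.Perm (Fin (k+1)),
        fderiv ℝ (fun y => u y (Fin.tail (I ∘ (σ * σ'))) J) x (Pi.single ((I ∘ (σ * σ')) 0) 1) := by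
        apply Finset.sum_congr rfl
        intro σ' _
        have hc : (I ∘ σ) ∘ σ' = I ∘ ⇑(σ * σ') := by
          funext i
          exact congrArg I (Equiv.Perm.mul_apply σ σ' i).symm
        rw [hc, step1 (σ * σ')]
    _ = ∑ σ' : Equiv.Perm (Fin (k+1)),
        fderiv ℝ (fun y => u y (Fin.tail (I ∘ σ')) J) x (Pi.single ((I ∘ σ') 0) 1) := by
        exact sum_perm_comp (fun π => fderiv ℝ (fun y => u y (Fin.tail (I ∘ π)) J) x
          (Pi.single ((I ∘ π) 0) 1)) σ

lemma opA_perm {k l : ℕ} (f : Tens k l)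
    (hf : ∀ (I : Idx k) (J : Idx l) (σ : Equiv.Perm (Fin k)) (τ : Equiv.Perm (Fin l)),
      f (I ∘ σ) (J ∘ τ) = f I J)
    (I : Idx k) (J : Idx l) (σ : Equiv.Perm (Fin k)) (τ : Equiv.Perm (Fin l)) :
    opA f (I ∘ σ) (J ∘ τ) = opA f I J := by
  simp only [opA]
  rw [NJ_comp_perm J τ]
  congr 1
  exact hf I (dswap ∘ J) σ τ

end Stage2

section Stage3
open Finset

lemma neg_one_pow_NJ {n : ℕ} (J : Idx n) :
    ((-1:ℝ))^(NJ J) = ∏ i, (if J i = 0 then (-1:ℝ) else 1) := by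
  classical
  rw [← Finset.prod_filter, Finset.prod_const, NJ]

lemma rot_slot (v : Fin 2 → ℝ) (c : Fin 2) :
    (if c = 0 then (-1:ℝ) else 1) * rot v (dswap c) = v c := by
  rcases fin2_cases c with h | h <;> subst h <;> simp [rot, dswap]

lemma opA_rot {k l : ℕ} (g : Tens k l) (I : Idx k) (v : Fin 2 → ℝ) :
    ∑ J : Idx l, opA g I J * vpow (rot v) J = ∑ J : Idx l, g I J * vpow v J := by
  classical
  have hinv : Function.Involutive (fun J : Idx l => dswap ∘ J) := by
    intro J; funext i; exact dswap_dswap (J i)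
  rw [← Equiv.sum_comp hinv.toPerm (fun J : Idx l => opA g I J * vpow (rot v) J)]
  apply Finset.sum_congr rfl
  intro J _
  have h1 : (hinv.toPerm : Idx l → Idx l) J = dswap ∘ J := rfl
  rw [h1]
  have h2 : dswap ∘ (dswap ∘ J) = J := hinv J
  simp only [opA, h2, NJ_dswap, Nat.sub_sub_self (NJ_le J)]
  have h3 : vpow (rot v) (dswap ∘ J) = ∏ i, rot v (dswap (J i)) := rfl
  have h4 : vpow v J = ∏ i, v (J i) := rfl
  rw [neg_one_pow_NJ, h3, h4]
  calc (∏ i, (if J i = 0 then (-1:ℝ) else 1)) * g I J * ∏ i, rot v (dswap (J i))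
      = g I J * ((∏ i, (if J i = 0 then (-1:ℝ) else 1)) * ∏ i, rot v (dswap (J i))) := by ring
    _ = g I J * ∏ i, ((if J i = 0 then (-1:ℝ) else 1) * rot v (dswap (J i))) := by
        rw [← Finset.prod_mul_distrib]
    _ = g I J * ∏ i, v (J i) := by
        congr 1
        exact Finset.prod_congr rfl (fun i _ => rot_slot v (J i))

lemma toFull_append {k l : ℕ} (f : Tens k l) (A : Idx k) (B : Idx l) :
    toFull f (Fin.append A B) = f A B := by
  simp only [toFull]
  congr 1
  · funext i; simp [Fin.append_left]
  · funext j; simp [Fin.append_right]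

lemma diag_eq {k l : ℕ} (u : (Fin 2 → ℝ) → Tens k l) (x v : Fin 2 → ℝ) :
    ∑ I : Idx (k+1), ∑ J : Idx l, dsym u x I J * vpow v I * vpow v J
      = ∑ I : Idx (k+1), ∑ J : Idx l, dprime u x I J * vpow v I * vpow v J := by
  classical
  have lhs_eq : ∑ I : Idx (k+1), ∑ J : Idx l, dsym u x I J * vpow v I * vpow v J
      = ∑ c : Fin 2, ∑ T : Idx k, ∑ J : Idx l,
          fderiv ℝ (fun y => u y T J) x (Pi.single c 1) * (v c * (vpow v T * vpow v J)) := by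
    calc ∑ I : Idx (k+1), ∑ J : Idx l, dsym u x I J * vpow v I * vpow v J
        = ∑ c : Fin 2, ∑ T : Idx k, ∑ J : Idx l,
            Sym (dfull (fun y => toFull (u y)) x) (Fin.cons c (Fin.append T J))
              * (v c * (vpow v T * vpow v J)) := by
          rw [sum_idx_cons (fun I => ∑ J : Idx l, dsym u x I J * vpow v I * vpow v J)]
          refine Finset.sum_congr rfl (fun c _ => Finset.sum_congr rfl (fun T _ =>
            Finset.sum_congr rfl (fun J _ => ?_)))
          simp only [dsym, Fin.tail_cons, Fin.cons_zero, vpow_cons]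
          ring
      _ = ∑ c : Fin 2, ∑ M : Idx (k+l), Sym (dfull (fun y => toFull (u y)) x) (Fin.cons c M)
              * (v c * vpow v M) := by
          refine Finset.sum_congr rfl (fun c _ => ?_)
          rw [sum_idx_append (fun M => Sym (dfull (fun y => toFull (u y)) x) (Fin.cons c M)
            * (v c * vpow v M))]
          refine Finset.sum_congr rfl (fun T _ => Finset.sum_congr rfl (fun J _ => ?_))
          rw [vpow_append]
      _ = ∑ K : Idx (k+l+1), Sym (dfull (fun y => toFull (u y)) x) K * vpow v K := by
          rw [sum_idx_cons (fun K => Sym (dfull (fun y => toFull (u y)) x) K * vpow v K)]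
          refine Finset.sum_congr rfl (fun c _ => Finset.sum_congr rfl (fun M _ => ?_))
          rw [vpow_cons]
      _ = ∑ K : Idx (k+l+1), dfull (fun y => toFull (u y)) x K * vpow v K :=
          sum_Sym_vpow _ v
      _ = ∑ c : Fin 2, ∑ M : Idx (k+l),
            dfull (fun y => toFull (u y)) x (Fin.cons c M) * (v c * vpow v M) := by
          rw [sum_idx_cons (fun K => dfull (fun y => toFull (u y)) x K * vpow v K)]
          refine Finset.sum_congr rfl (fun c _ => Finset.sum_congr rfl (fun M _ => ?_))
          rw [vpow_cons]
      _ = ∑ c : Fin 2, ∑ T : Idx k, ∑ J : Idx l,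
          fderiv ℝ (fun y => u y T J) x (Pi.single c 1) * (v c * (vpow v T * vpow v J)) := by
          refine Finset.sum_congr rfl (fun c _ => ?_)
          rw [sum_idx_append (fun M => dfull (fun y => toFull (u y)) x (Fin.cons c M)
            * (v c * vpow v M))]
          refine Finset.sum_congr rfl (fun T _ => Finset.sum_congr rfl (fun J _ => ?_))
          have hfun : (fun y => toFull (u y) (Fin.append T J)) = fun y => u y T J :=
            funext (fun y => toFull_append (u y) T J)
          simp only [dfull, Fin.tail_cons, Fin.cons_zero, hfun, vpow_append]
  have rhs_eq : ∑ I : Idx (k+1), ∑ J : Idx l, dprime u x I J * vpow v I * vpow v J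
      = ∑ c : Fin 2, ∑ T : Idx k, ∑ J : Idx l,
          fderiv ℝ (fun y => u y T J) x (Pi.single c 1) * (v c * (vpow v T * vpow v J)) := by
    calc ∑ I : Idx (k+1), ∑ J : Idx l, dprime u x I J * vpow v I * vpow v J
        = ∑ J : Idx l, ∑ I : Idx (k+1), dprime u x I J * vpow v I * vpow v J :=
          Finset.sum_comm
      _ = ∑ J : Idx l, ∑ I : Idx (k+1),
            (fderiv ℝ (fun y => u y (Fin.tail I) J) x (Pi.single (I 0) 1)) * vpow v I
              * vpow v J := by
          refine Finset.sum_congr rfl (fun J _ => ?_)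
          have hs : ∑ I : Idx (k+1), dprime u x I J * vpow v I
              = ∑ I : Idx (k+1),
                (fderiv ℝ (fun y => u y (Fin.tail I) J) x (Pi.single (I 0) 1)) * vpow v I := by
            exact sum_Sym_vpow
              (fun I => fderiv ℝ (fun y => u y (Fin.tail I) J) x (Pi.single (I 0) 1)) v
          calc ∑ I : Idx (k+1), dprime u x I J * vpow v I * vpow v J
              = (∑ I : Idx (k+1), dprime u x I J * vpow v I) * vpow v J := by
                rw [Finset.sum_mul]
            _ = (∑ I : Idx (k+1),
                  (fderiv ℝ (fun y => u y (Fin.tail I) J) x (Pi.single (I 0) 1)) * vpow v I)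
                  * vpow v J := by rw [hs]
            _ = _ := by rw [← Finset.sum_mul]
      _ = ∑ J : Idx l, ∑ c : Fin 2, ∑ T : Idx k,
            fderiv ℝ (fun y => u y T J) x (Pi.single c 1) * (v c * vpow v T) * vpow v J := by
          refine Finset.sum_congr rfl (fun J _ => ?_)
          rw [sum_idx_cons (fun I =>
            (fderiv ℝ (fun y => u y (Fin.tail I) J) x (Pi.single (I 0) 1)) * vpow v I
              * vpow v J)]
          refine Finset.sum_congr rfl (fun c _ => Finset.sum_congr rfl (fun T _ => ?_))
          simp only [Fin.tail_cons, Fin.cons_zero, vpow_cons]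
      _ = ∑ c : Fin 2, ∑ T : Idx k, ∑ J : Idx l,
          fderiv ℝ (fun y => u y T J) x (Pi.single c 1) * (v c * (vpow v T * vpow v J)) := by
          rw [Finset.sum_comm]
          refine Finset.sum_congr rfl (fun c _ => ?_)
          rw [Finset.sum_comm]
          refine Finset.sum_congr rfl (fun T _ => Finset.sum_congr rfl (fun J _ => ?_))
          ring
  rw [lhs_eq, rhs_eq]

end Stage3

section Stage4
open Finset

lemma lam_count {k l : ℕ} (W : ℕ → ℕ → ℝ) (I : Idx (k+1)) (J : Idx (l+1)) :
    lam (fun (A : Idx k) (B : Idx l) => W (NJ A) (NJ B)) I J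
      = ((k:ℝ)+1)⁻¹ * (((l:ℝ)+1)⁻¹ *
        ((NJ I : ℝ) * (NJ J : ℝ) * W (NJ I - 1) (NJ J - 1)
          + (((k+1) - NJ I : ℕ) : ℝ) * (((l+1) - NJ J : ℕ) : ℝ) * W (NJ I) (NJ J))) := by
  classical
  set s : Fin 2 → Fin 2 → ℝ := fun c d =>
    (if c = d then (1:ℝ) else 0) * W (NJ I - (if c = 0 then 1 else 0))
      (NJ J - (if d = 0 then 1 else 0)) with hs
  have key : ∀ (σ : Equiv.Perm (Fin (k+1))) (τ : Equiv.Perm (Fin (l+1))),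
      (if (I ∘ σ) 0 = (J ∘ τ) 0 then (1:ℝ) else 0)
        * W (NJ (Fin.tail (I ∘ σ))) (NJ (Fin.tail (J ∘ τ)))
      = s (I (σ 0)) (J (τ 0)) := by
    intro σ τ
    have h1 : NJ (Fin.tail (I ∘ σ)) = NJ I - (if I (σ 0) = 0 then 1 else 0) := by
      have := NJ_head_tail (I ∘ σ)
      rw [NJ_comp_perm I σ] at this
      simp only [Function.comp_apply] at this
      omega
    have h2 : NJ (Fin.tail (J ∘ τ)) = NJ J - (if J (τ 0) = 0 then 1 else 0) := by
      have := NJ_head_tail (J ∘ τ)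
      rw [NJ_comp_perm J τ] at this
      simp only [Function.comp_apply] at this
      omega
    rw [h1, h2]
    simp only [hs, Function.comp_apply]
  have e1 : ∀ σ : Equiv.Perm (Fin (k+1)),
      ∑ τ : Equiv.Perm (Fin (l+1)),
        (if (I ∘ σ) 0 = (J ∘ τ) 0 then (1:ℝ) else 0)
          * W (NJ (Fin.tail (I ∘ σ))) (NJ (Fin.tail (J ∘ τ)))
      = (l.factorial : ℝ) * ∑ q, s (I (σ 0)) (J q) := by
    intro σ
    rw [Finset.sum_congr rfl (fun τ _ => key σ τ)]
    exact sum_perm_head (fun p => s (I (σ 0)) (J p))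
  have e2 : ∑ σ : Equiv.Perm (Fin (k+1)), ∑ q, s (I (σ 0)) (J q)
      = (k.factorial : ℝ) * ∑ p, ∑ q, s (I p) (J q) :=
    sum_perm_head (fun p => ∑ q, s (I p) (J q))
  have e3 : ∑ p, ∑ q, s (I p) (J q)
      = (NJ I : ℝ) * ((NJ J : ℝ) * s 0 0 + (((l+1) - NJ J : ℕ) : ℝ) * s 0 1)
        + (((k+1) - NJ I : ℕ) : ℝ)
          * ((NJ J : ℝ) * s 1 0 + (((l+1) - NJ J : ℕ) : ℝ) * s 1 1) := by
    rw [Finset.sum_congr rfl (fun p _ => sum_count J (fun d => s (I p) d))]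
    exact sum_count I (fun c => (NJ J : ℝ) * s c 0 + (((l+1) - NJ J : ℕ) : ℝ) * s c 1)
  have s00 : s 0 0 = W (NJ I - 1) (NJ J - 1) := by simp [hs]
  have s01 : s 0 1 = 0 := by simp [hs]
  have s10 : s 1 0 = 0 := by simp [hs]
  have s11 : s 1 1 = W (NJ I) (NJ J) := by simp [hs]
  have hkf : ((k.factorial : ℝ)) ≠ 0 := by exact_mod_cast Nat.factorial_ne_zero k
  have hlf : ((l.factorial : ℝ)) ≠ 0 := by exact_mod_cast Nat.factorial_ne_zero l
  have hk1 : ((k:ℝ)+1) ≠ 0 := by positivity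
  have hl1 : ((l:ℝ)+1) ≠ 0 := by positivity
  calc lam (fun (A : Idx k) (B : Idx l) => W (NJ A) (NJ B)) I J
      = ((k+1).factorial : ℝ)⁻¹ * ∑ σ : Equiv.Perm (Fin (k+1)),
          ((l+1).factorial : ℝ)⁻¹ *
            ((l.factorial : ℝ) * ∑ q, s (I (σ 0)) (J q)) := by
        simp only [lam, symK, symL]
        congr 1
        refine Finset.sum_congr rfl (fun σ _ => ?_)
        rw [← e1 σ]
    _ = ((k+1).factorial : ℝ)⁻¹ * (((l+1).factorial : ℝ)⁻¹ *
          ((l.factorial : ℝ) * ((k.factorial : ℝ) * ∑ p, ∑ q, s (I p) (J q)))) := by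
        rw [← Finset.mul_sum, ← Finset.mul_sum, e2]
    _ = _ := by
        rw [e3, s00, s01, s10, s11, Nat.factorial_succ k, Nat.factorial_succ l]
        push_cast
        field_simp
        ring
end Stage4

section Stage5
open Finset

lemma vpow_t {n : ℕ} (t : ℝ) (I : Idx n) : vpow ![t,1] I = t ^ (NJ I) := by
  classical
  have h : ∀ i, (![t,(1:ℝ)]) (I i) = if I i = 0 then t else 1 := by
    intro i
    rcases fin2_cases (I i) with h | h <;> simp [h]
  rw [vpow, Finset.prod_congr rfl (fun i _ => h i), ← Finset.prod_filter,
    Finset.prod_const, NJ]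

lemma vpow_rot_t {n : ℕ} (t : ℝ) (J : Idx n) :
    vpow (rot ![t,1]) J = (-1:ℝ)^(n - NJ J) * t^(n - NJ J) := by
  classical
  have hrot : rot ![t,(1:ℝ)] = ![1,-t] := by
    funext i
    rcases fin2_cases i with h | h <;> subst h <;> simp [rot]
  have h : ∀ i, (![(1:ℝ),-t]) (J i) = if ¬ (J i = 0) then -t else 1 := by
    intro i
    rcases fin2_cases (J i) with h | h <;> simp [h]
  have hcard : (Finset.univ.filter fun i : Fin n => ¬ (J i = 0)).card = n - NJ J := by
    have h2 := Finset.card_filter_add_card_filter_not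
      (s := (Finset.univ : Finset (Fin n))) (p := fun j => J j = 0)
    simp only [Finset.card_univ, Fintype.card_fin] at h2
    simp only [NJ]
    omega
  rw [hrot, vpow, Finset.prod_congr rfl (fun i _ => h i), ← Finset.prod_filter,
    Finset.prod_const, hcard, neg_pow]

lemma coeff_vanish {k l : ℕ} (F : Tens (k+1) (l+1))
    (hq : ∀ v : Fin 2 → ℝ,
      ∑ I : Idx (k+1), ∑ J : Idx (l+1), F I J * vpow v I * vpow (rot v) J = 0) :
    ∀ m : ℕ, ∑ I : Idx (k+1), ∑ J : Idx (l+1),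
      (if NJ I + (l + 1 - NJ J) = m then F I J * (-1:ℝ)^(l + 1 - NJ J) else 0) = 0 := by
  classical
  set P : Polynomial ℝ := ∑ I : Idx (k+1), ∑ J : Idx (l+1),
    Polynomial.C (F I J * (-1:ℝ)^(l + 1 - NJ J)) * Polynomial.X^(NJ I + (l + 1 - NJ J))
    with hPdef
  have hP : P = 0 := by
    apply Polynomial.funext
    intro t
    have heval : P.eval t = ∑ I : Idx (k+1), ∑ J : Idx (l+1),
        F I J * (-1:ℝ)^(l + 1 - NJ J) * t^(NJ I + (l + 1 - NJ J)) := by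
      simp [hPdef, Polynomial.eval_finset_sum]
    rw [heval, Polynomial.eval_zero]
    have := hq ![t,1]
    rw [← this]
    refine Finset.sum_congr rfl (fun I _ => Finset.sum_congr rfl (fun J _ => ?_))
    rw [vpow_t, vpow_rot_t, pow_add]
    ring
  intro m
  have hc := congrArg (fun p : Polynomial ℝ => p.coeff m) hP
  simp only [hPdef, Polynomial.finset_sum_coeff, Polynomial.coeff_C_mul,
    Polynomial.coeff_X_pow, Polynomial.coeff_zero] at hc
  refine Eq.trans ?_ hc
  refine Finset.sum_congr rfl (fun I _ => Finset.sum_congr rfl (fun J _ => ?_))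
  by_cases hm : NJ I + (l + 1 - NJ J) = m
  · simp [hm]
  · simp [hm, Ne.symm hm]
end Stage5

section Stage6
open Finset

noncomputable def gd (K L : ℕ) (Fh : ℕ → ℕ → ℝ) (a b : ℕ) : ℝ :=
  (-1:ℝ)^b * ((K+1).choose a : ℝ) * ((L+1).choose b : ℝ) * Fh a b

noncomputable def Sd (K L : ℕ) (Fh : ℕ → ℕ → ℝ) (a b : ℕ) : ℝ :=
  ∑ t ∈ Finset.range (min a b + 1), gd K L Fh (a-t) (b-t)

lemma choose_cast_succ (n a : ℕ) (ha : a ≤ n) :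
    ((a:ℝ)+1) * ((n+1).choose (a+1) : ℝ) = (((n:ℝ)+1) - a) * ((n+1).choose a : ℝ) := by
  have h := Nat.choose_succ_right_eq (n+1) a
  have h2 : ((n + 1 : ℕ) - a : ℕ) = n + 1 - a := rfl
  have hcast : (((n+1) - a : ℕ) : ℝ) = ((n:ℝ)+1) - a := by
    rw [Nat.cast_sub (by omega)]
    push_cast
    ring
  have h3 : (((n+1).choose (a+1) : ℕ) : ℝ) * ((a:ℝ)+1)
      = ((n+1).choose a : ℝ) * (((n:ℝ)+1) - a) := by
    rw [← hcast]
    exact_mod_cast congrArg (fun z : ℕ => (z : ℝ)) h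
  linarith [h3]

lemma T_lemma (K L : ℕ) (Fh : ℕ → ℕ → ℝ) :
    ∀ a b, a ≤ K → b ≤ L →
      (-1:ℝ)^b * ((K+1).choose a : ℝ) * ((L+1).choose b : ℝ)
        * (((K:ℝ)+1) - a) * (((L:ℝ)+1) - b) * wrec K L Fh a b
      = ((K:ℝ)+1) * ((L:ℝ)+1) * Sd K L Fh a b := by
  intro a
  induction a with
  | zero =>
    intro b _ hb
    have hw := wrec_zero K L Fh hb
    have hSd : Sd K L Fh 0 b = gd K L Fh 0 b := by
      simp [Sd, Nat.min_eq_left (Nat.zero_le b)]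
    rw [hSd]
    simp only [gd, Nat.choose_zero_right, Nat.cast_one, Nat.cast_zero]
    push_cast
    linear_combination ((-1:ℝ))^b * ((L+1).choose b : ℝ) * (((K:ℝ)+1)) * hw
  | succ a ih =>
    intro b ha hb
    cases b with
    | zero =>
      have hw := wrec_succ_zero K L Fh ha
      have hSd : Sd K L Fh (a+1) 0 = gd K L Fh (a+1) 0 := by
        simp [Sd]
      rw [hSd]
      simp only [gd, Nat.choose_zero_right, Nat.cast_one, pow_zero]
      push_cast
      linear_combination (((K+1).choose (a+1) : ℝ)) * (((L:ℝ)+1)) * hw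
    | succ b =>
      have hw := wrec_succ_succ K L Fh ha hb
      have hih := ih b (by omega) (by omega)
      have hSd : Sd K L Fh (a+1) (b+1) = gd K L Fh (a+1) (b+1) + Sd K L Fh a b := by
        simp only [Sd, Nat.succ_min_succ]
        rw [Finset.sum_range_succ']
        simp only [Nat.succ_sub_succ, Nat.sub_zero]
        ring
      have hA := choose_cast_succ K a (by omega)
      have hB := choose_cast_succ L b (by omega)
      rw [hSd]
      simp only [gd]
      push_cast
      push_cast at hih
      -- goal is linear algebra in hw, hih, hA, hB
      linear_combination
        ((-1:ℝ))^(b+1) * ((K+1).choose (a+1) : ℝ) * ((L+1).choose (b+1) : ℝ) * hw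
        - ((-1:ℝ))^(b+1) * (((b:ℝ)+1) * ((L+1).choose (b+1) : ℝ)) * wrec K L Fh a b * hA
        - ((-1:ℝ))^(b+1) * ((((K:ℝ)+1) - a) * (((K+1).choose a : ℝ))) * wrec K L Fh a b * hB
        + hih

lemma inner_collapse (L : ℕ) (gfun : ℕ → ℝ) (m a' : ℕ) :
    ∑ b' ∈ Finset.range (L+2), (if a' + (L+1-b') = m then gfun b' else 0)
      = if m ≤ a' + L + 1 ∧ a' ≤ m then gfun (a' + L + 1 - m) else 0 := by
  by_cases hcond : m ≤ a' + L + 1 ∧ a' ≤ m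
  · rw [if_pos hcond]
    have hmem : a' + L + 1 - m ∈ Finset.range (L+2) := by
      simp only [Finset.mem_range]; omega
    rw [Finset.sum_eq_single_of_mem _ hmem]
    · rw [if_pos (by omega)]
    · intro b' hb' hne
      rw [if_neg]
      simp only [Finset.mem_range] at hb'
      omega
  · rw [if_neg hcond]
    apply Finset.sum_eq_zero
    intro b' hb'
    simp only [Finset.mem_range] at hb'
    rw [if_neg]
    omega

lemma diagA (K L : ℕ) (Fh : ℕ → ℕ → ℝ) (b : ℕ) (hb1 : 1 ≤ b) (hb : b ≤ L+1) :
    (∑ a' ∈ Finset.range (K+2), ∑ b' ∈ Finset.range (L+2),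
      (if a' + (L+1-b') = (K+1) + (L+1-b) then gd K L Fh a' b' else 0))
    = gd K L Fh (K+1) b + Sd K L Fh K (b-1) := by
  set m := (K+1) + (L+1-b) with hm
  have step1 : ∀ a' ∈ Finset.range (K+2),
      ∑ b' ∈ Finset.range (L+2), (if a' + (L+1-b') = m then gd K L Fh a' b' else 0)
      = if K + 1 ≤ a' + b then gd K L Fh a' (a' + b - (K+1)) else 0 := by
    intro a' ha'
    simp only [Finset.mem_range] at ha'
    rw [inner_collapse L (fun b' => gd K L Fh a' b') m a']
    by_cases hc : K + 1 ≤ a' + b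
    · rw [if_pos ⟨by omega, by omega⟩, if_pos hc]
      congr 1
      omega
    · rw [if_neg (by omega), if_neg hc]
  rw [Finset.sum_congr rfl step1]
  have step2 : ∑ a' ∈ Finset.range (K+2),
      (if K + 1 ≤ a' + b then gd K L Fh a' (a' + b - (K+1)) else 0)
      = ∑ t ∈ Finset.range (K+2),
        (if t ≤ b then gd K L Fh (K+1-t) (b-t) else 0) := by
    rw [← Finset.sum_range_reflect]
    apply Finset.sum_congr rfl
    intro t ht
    simp only [Finset.mem_range] at ht
    by_cases hc : t ≤ b
    · rw [if_pos (by omega), if_pos hc]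
      congr 1 <;> omega
    · rw [if_neg (by omega), if_neg hc]
  rw [step2, Finset.sum_range_succ']
  have h0 : (if 0 ≤ b then gd K L Fh (K+1-0) (b-0) else 0) = gd K L Fh (K+1) b := by
    rw [if_pos (Nat.zero_le b)]
    norm_num
  rw [h0, add_comm]
  congr 1
  have step3 : ∑ t ∈ Finset.range (K+1),
      (if t+1 ≤ b then gd K L Fh (K+1-(t+1)) (b-(t+1)) else 0)
      = Sd K L Fh K (b-1) := by
    rw [Sd, ← Finset.sum_subset (Finset.range_subset_range.mpr (by omega : min K (b-1) + 1 ≤ K+1))]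
    · apply Finset.sum_congr rfl
      intro t ht
      simp only [Finset.mem_range] at ht
      rw [if_pos (by omega)]
      congr 1 <;> omega
    · intro t ht hnt
      simp only [Finset.mem_range] at ht hnt
      rw [if_neg (by omega)]
  exact step3

lemma diagB (K L : ℕ) (Fh : ℕ → ℕ → ℝ) (a : ℕ) (ha1 : 1 ≤ a) (ha : a ≤ K) :
    (∑ a' ∈ Finset.range (K+2), ∑ b' ∈ Finset.range (L+2),
      (if a' + (L+1-b') = a then gd K L Fh a' b' else 0))
    = gd K L Fh a (L+1) + Sd K L Fh (a-1) L := by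
  have step1 : ∀ a' ∈ Finset.range (K+2),
      ∑ b' ∈ Finset.range (L+2), (if a' + (L+1-b') = a then gd K L Fh a' b' else 0)
      = if a ≤ a' + L + 1 ∧ a' ≤ a then gd K L Fh a' (a' + L + 1 - a) else 0 := by
    intro a' _
    exact inner_collapse L (fun b' => gd K L Fh a' b') a a'
  rw [Finset.sum_congr rfl step1]
  have hsub : ∑ a' ∈ Finset.range (K+2),
      (if a ≤ a' + L + 1 ∧ a' ≤ a then gd K L Fh a' (a' + L + 1 - a) else 0)
      = ∑ a' ∈ Finset.range (a+1),
      (if a ≤ a' + L + 1 ∧ a' ≤ a then gd K L Fh a' (a' + L + 1 - a) else 0) := by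
    rw [Finset.sum_subset (Finset.range_subset_range.mpr (by omega : a + 1 ≤ K+2))]
    intro t ht hnt
    simp only [Finset.mem_range] at ht hnt
    rw [if_neg (by omega)]
  rw [hsub, ← Finset.sum_range_reflect]
  have step2 : ∀ t ∈ Finset.range (a+1),
      (if a ≤ (a+1-1-t) + L + 1 ∧ (a+1-1-t) ≤ a then
        gd K L Fh (a+1-1-t) ((a+1-1-t) + L + 1 - a) else 0)
      = if t ≤ L + 1 then gd K L Fh (a-t) (L+1-t) else 0 := by
    intro t ht
    simp only [Finset.mem_range] at ht
    by_cases hc : t ≤ L + 1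
    · rw [if_pos ⟨by omega, by omega⟩, if_pos hc]
      congr 1 <;> omega
    · rw [if_neg (by omega), if_neg hc]
  rw [Finset.sum_congr rfl step2, Finset.sum_range_succ']
  have h0 : (if 0 ≤ L + 1 then gd K L Fh (a-0) (L+1-0) else 0) = gd K L Fh a (L+1) := by
    rw [if_pos (Nat.zero_le _)]
    norm_num
  rw [h0, add_comm]
  congr 1
  rw [Sd, ← Finset.sum_subset (Finset.range_subset_range.mpr (by omega : min (a-1) L + 1 ≤ a))]
  · apply Finset.sum_congr rfl
    intro t ht
    simp only [Finset.mem_range] at ht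
    rw [if_pos (by omega)]
    congr 1 <;> omega
  · intro t ht hnt
    simp only [Finset.mem_range] at ht hnt
    rw [if_neg (by omega)]

end Stage6

section Stage7
open Finset

lemma key_eq (K L : ℕ) (Fh : ℕ → ℕ → ℝ)
    (hD : ∀ m : ℕ, ∑ a ∈ Finset.range (K+2), ∑ b ∈ Finset.range (L+2),
      (if a + (L+1-b) = m then gd K L Fh a b else 0) = 0) :
    ∀ a b, a ≤ K+1 → b ≤ L+1 →
      (a:ℝ) * (b:ℝ) * wrec K L Fh (a-1) (b-1)
        + (((K+1) - a : ℕ):ℝ) * (((L+1) - b : ℕ):ℝ) * wrec K L Fh a b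
      = ((K:ℝ)+1) * ((L:ℝ)+1) * Fh a b := by
  intro a b ha hb
  by_cases haK : a ≤ K
  · by_cases hbL : b ≤ L
    · -- interior case
      have hc1 : (((K+1) - a : ℕ):ℝ) = ((K:ℝ)+1) - a := by
        rw [Nat.cast_sub (by omega)]; push_cast; ring
      have hc2 : (((L+1) - b : ℕ):ℝ) = ((L:ℝ)+1) - b := by
        rw [Nat.cast_sub (by omega)]; push_cast; ring
      rw [hc1, hc2]
      cases a with
      | zero =>
        have hw := wrec_zero K L Fh hbL
        push_cast
        linear_combination (((K:ℝ)+1)) * hw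
      | succ a =>
        cases b with
        | zero =>
          have hw := wrec_succ_zero K L Fh haK
          push_cast
          linear_combination (((L:ℝ)+1)) * hw
        | succ b =>
          have hw := wrec_succ_succ K L Fh haK hbL
          simp only [Nat.add_sub_cancel]
          push_cast
          linear_combination hw
    · -- b = L+1, a ≤ K
      have hbeq : b = L+1 := by omega
      subst hbeq
      cases a with
      | zero =>
        have hd := hD 0
        rw [Finset.sum_congr rfl (fun a' _ =>
          inner_collapse L (fun b' => gd K L Fh a' b') 0 a')] at hd
        have hcol : ∀ a' ∈ Finset.range (K+2),
            (if 0 ≤ a' + L + 1 ∧ a' ≤ 0 then gd K L Fh a' (a' + L + 1 - 0) else 0)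
            = if a' = 0 then gd K L Fh 0 (L+1) else 0 := by
          intro a' ha'
          by_cases hc : a' = 0
          · subst hc
            rw [if_pos ⟨by omega, by omega⟩, if_pos rfl]
            congr 1
            omega
          · rw [if_neg (by omega), if_neg hc]
        rw [Finset.sum_congr rfl hcol, Finset.sum_ite_eq' (Finset.range (K+2)) 0
          (fun _ => gd K L Fh 0 (L+1))] at hd
        rw [if_pos (by simp only [Finset.mem_range]; omega)] at hd
        simp only [gd, Nat.choose_self, Nat.choose_zero_right, Nat.cast_one, one_mul,
          mul_one] at hd
        have hF0 : Fh 0 (L+1) = 0 := by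
          rcases mul_eq_zero.mp hd with h | h
          · exact absurd h (pow_ne_zero _ (by norm_num))
          · exact h
        simp only [Nat.sub_self, Nat.cast_zero, hF0]
        push_cast
        ring
      | succ a' =>
        have hd := hD (a'+1)
        rw [diagB K L Fh (a'+1) (by omega) (by omega)] at hd
        simp only [Nat.add_sub_cancel] at hd
        have hT := T_lemma K L Fh a' L (by omega) (le_refl L)
        have hA := choose_cast_succ K a' (by omega)
        have e1 : (((L+1).choose L : ℕ):ℝ) = (L:ℝ)+1 := by
          rw [Nat.choose_succ_self_right]; push_cast; ring
        have e2 : (((L+1).choose (L+1) : ℕ):ℝ) = 1 := by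
          rw [Nat.choose_self]; norm_num
        rw [e1] at hT
        simp only [gd, e2] at hd
        have hCne : (((K+1).choose (a'+1) : ℕ):ℝ) ≠ 0 := by
          have := Nat.choose_pos (show a'+1 ≤ K+1 by omega)
          positivity
        have hsne : ((-1:ℝ))^L ≠ 0 := by
          apply pow_ne_zero; norm_num
        simp only [Nat.add_sub_cancel, Nat.sub_self, Nat.cast_zero]
        refine mul_left_cancel₀ (mul_ne_zero hsne hCne) ?_
        push_cast
        push_cast at hT hd hA
        linear_combination hT + (((K:ℝ)+1) * (((L:ℝ)+1))) * hd
          + ((-1:ℝ))^L * (((L:ℝ)+1)) * wrec K L Fh a' L * hA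
  · -- a = K+1
    have haeq : a = K+1 := by omega
    subst haeq
    cases b with
    | zero =>
      -- single point diagonal: Fh (K+1) 0 = 0
      have hd := hD ((K+1) + (L+1))
      rw [Finset.sum_congr rfl (fun a' _ =>
        inner_collapse L (fun b' => gd K L Fh a' b') ((K+1) + (L+1)) a')] at hd
      have hcol : ∀ a' ∈ Finset.range (K+2),
          (if (K+1) + (L+1) ≤ a' + L + 1 ∧ a' ≤ (K+1) + (L+1) then
            gd K L Fh a' (a' + L + 1 - ((K+1) + (L+1))) else 0)
          = if a' = K+1 then gd K L Fh (K+1) 0 else 0 := by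
        intro a' ha'
        simp only [Finset.mem_range] at ha'
        by_cases hc : a' = K+1
        · subst hc
          rw [if_pos ⟨by omega, by omega⟩, if_pos rfl]
          congr 1
          omega
        · rw [if_neg (by omega), if_neg hc]
      rw [Finset.sum_congr rfl hcol, Finset.sum_ite_eq' (Finset.range (K+2)) (K+1)
        (fun _ => gd K L Fh (K+1) 0)] at hd
      rw [if_pos (by simp only [Finset.mem_range]; omega)] at hd
      simp only [gd, Nat.choose_self, Nat.choose_zero_right, Nat.cast_one, pow_zero,
        one_mul, mul_one] at hd
      simp only [Nat.sub_self, Nat.cast_zero, Nat.cast_ofNat, hd]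
      push_cast
      ring
    | succ b' =>
      have hd := hD ((K+1) + (L+1 - (b'+1)))
      rw [diagA K L Fh (b'+1) (by omega) (by omega)] at hd
      simp only [Nat.add_sub_cancel] at hd
      have hT := T_lemma K L Fh K b' (le_refl K) (by omega)
      have hB := choose_cast_succ L b' (by omega)
      have e1 : (((K+1).choose K : ℕ) : ℝ) = (K:ℝ)+1 := by
        rw [Nat.choose_succ_self_right]; push_cast; ring
      have e2 : (((K+1).choose (K+1) : ℕ) : ℝ) = 1 := by
        rw [Nat.choose_self]; norm_num
      rw [e1] at hT
      simp only [gd, e2] at hd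
      have hCne : (((L+1).choose (b'+1) : ℕ):ℝ) ≠ 0 := by
        have := Nat.choose_pos (show b'+1 ≤ L+1 by omega)
        positivity
      have hsne : ((-1:ℝ))^(b') ≠ 0 := by
        apply pow_ne_zero; norm_num
      simp only [Nat.add_sub_cancel, Nat.sub_self, Nat.cast_zero]
      refine mul_left_cancel₀ (mul_ne_zero hsne hCne) ?_
      push_cast
      push_cast at hT hd hB
      linear_combination hT + (((K:ℝ)+1) * (((L:ℝ)+1))) * hd
        + ((-1:ℝ))^b' * (((K:ℝ)+1)) * wrec K L Fh K b' * hB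

end Stage7

/-- for any smooth `(k-1,ℓ)`-tensor field `u` (symmetric in each group,
`k,ℓ ≥ 1`) on `ℝ²` with the flat connection, there is a smooth `(k-1,ℓ-1)`-tensor field `w`
with `A(dˢu - d'u) = λw`. -/
theorem A_dsym_sub_dprime_eq_lam (k l : ℕ) (u : (Fin 2 → ℝ) → Tens k (l + 1))
    (hu : SmoothT u) (hsym : ∀ x, SymmIn (u x)) :
    ∃ w : (Fin 2 → ℝ) → Tens k l, SmoothT w ∧
      ∀ x I J,
        opA (fun I' J' => dsym u x I' J' - dprime u x I' J') I J = lam (w x) I J := by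
  classical
  set Fh : (Fin 2 → ℝ) → ℕ → ℕ → ℝ :=
    fun x a b => opA (fun I' J' => dsym u x I' J' - dprime u x I' J')
      (cI (k+1) a) (cI (l+1) b) with hFh
  refine ⟨fun x A B => wrec k l (Fh x) (NJ A) (NJ B), ?_, ?_⟩
  · -- smoothness
    intro A B
    apply wrec_smooth
    intro a b
    simp only [hFh, opA]
    exact contDiff_const.mul ((smooth_dsym u hu _ _).sub (smooth_dprime u hu _ _))
  · intro x I J
    set Fx : Tens (k+1) (l+1) :=
      opA (fun I' J' => dsym u x I' J' - dprime u x I' J') with hFx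
    have hGinv : ∀ (I' : Idx (k+1)) (J' : Idx (l+1)) (σ : Equiv.Perm (Fin (k+1)))
        (τ : Equiv.Perm (Fin (l+1))),
        (fun I'' J'' => dsym u x I'' J'' - dprime u x I'' J'') (I' ∘ σ) (J' ∘ τ)
          = (fun I'' J'' => dsym u x I'' J'' - dprime u x I'' J'') I' J' := by
      intro I' J' σ τ
      simp only
      rw [dsym_perm u x I' J' σ τ, dprime_perm u hsym x I' J' σ τ]
    have Finv : ∀ (I' : Idx (k+1)) (J' : Idx (l+1)) (σ : Equiv.Perm (Fin (k+1)))
        (τ : Equiv.Perm (Fin (l+1))), Fx (I' ∘ σ) (J' ∘ τ) = Fx I' J' := by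
      intro I' J' σ τ
      exact opA_perm _ hGinv I' J' σ τ
    have Fcount : ∀ (I' : Idx (k+1)) (J' : Idx (l+1)), Fx I' J' = Fh x (NJ I') (NJ J') := by
      intro I' J'
      obtain ⟨σ, hσ⟩ := exists_comp_perm (cI (k+1) (NJ I')) I'
        (by rw [NJ_cI (NJ_le I')])
      obtain ⟨τ, hτ⟩ := exists_comp_perm (cI (l+1) (NJ J')) J'
        (by rw [NJ_cI (NJ_le J')])
      calc Fx I' J' = Fx (cI (k+1) (NJ I') ∘ σ) (cI (l+1) (NJ J') ∘ τ) := by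
            rw [← hσ, ← hτ]
        _ = Fx (cI (k+1) (NJ I')) (cI (l+1) (NJ J')) := Finv _ _ σ τ
        _ = Fh x (NJ I') (NJ J') := rfl
    have hq : ∀ v : Fin 2 → ℝ,
        ∑ I' : Idx (k+1), ∑ J' : Idx (l+1), Fx I' J' * vpow v I' * vpow (rot v) J' = 0 := by
      intro v
      have step1 : ∑ I' : Idx (k+1), ∑ J' : Idx (l+1),
          Fx I' J' * vpow v I' * vpow (rot v) J'
          = ∑ I' : Idx (k+1), ∑ J' : Idx (l+1),
            (dsym u x I' J' - dprime u x I' J') * vpow v I' * vpow v J' := by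
        refine Finset.sum_congr rfl (fun I' _ => ?_)
        have h1 : ∑ J' : Idx (l+1), Fx I' J' * vpow v I' * vpow (rot v) J'
            = vpow v I' * ∑ J' : Idx (l+1), Fx I' J' * vpow (rot v) J' := by
          rw [Finset.mul_sum]
          refine Finset.sum_congr rfl (fun J' _ => by ring)
        have h2 := opA_rot (fun I'' J'' => dsym u x I'' J'' - dprime u x I'' J'') I' v
        rw [h1, h2, Finset.mul_sum]
        refine Finset.sum_congr rfl (fun J' _ => by ring)
      rw [step1]
      have step2 : ∑ I' : Idx (k+1), ∑ J' : Idx (l+1),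
          (dsym u x I' J' - dprime u x I' J') * vpow v I' * vpow v J'
          = (∑ I' : Idx (k+1), ∑ J' : Idx (l+1), dsym u x I' J' * vpow v I' * vpow v J')
            - ∑ I' : Idx (k+1), ∑ J' : Idx (l+1), dprime u x I' J' * vpow v I' * vpow v J' := by
        rw [← Finset.sum_sub_distrib]
        refine Finset.sum_congr rfl (fun I' _ => ?_)
        rw [← Finset.sum_sub_distrib]
        refine Finset.sum_congr rfl (fun J' _ => by ring)
      rw [step2, diag_eq u x v, sub_self]
    have hcv := coeff_vanish Fx hq
    have hD : ∀ m : ℕ, ∑ a ∈ Finset.range (k+2), ∑ b ∈ Finset.range (l+2),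
        (if a + (l+1-b) = m then gd k l (Fh x) a b else 0) = 0 := by
      intro m
      have h1 := hcv m
      have hinner : ∀ I' : Idx (k+1),
          (∑ J' : Idx (l+1),
            if NJ I' + (l + 1 - NJ J') = m then Fx I' J' * (-1:ℝ)^(l + 1 - NJ J') else 0)
          = ∑ b ∈ Finset.range (l+2), ((l+1).choose b : ℝ) *
            (if NJ I' + (l+1-b) = m then Fh x (NJ I') b * (-1:ℝ)^(l+1-b) else 0) := by
        intro I'
        exact sum_NJ_fiber _ _ (fun J' => by rw [Fcount])
      have h2 : ∑ I' : Idx (k+1), ∑ J' : Idx (l+1),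
          (if NJ I' + (l + 1 - NJ J') = m then Fx I' J' * (-1:ℝ)^(l + 1 - NJ J') else 0)
          = ∑ a ∈ Finset.range (k+2), ((k+1).choose a : ℝ) *
              ∑ b ∈ Finset.range (l+2), ((l+1).choose b : ℝ) *
                (if a + (l+1-b) = m then Fh x a b * (-1:ℝ)^(l+1-b) else 0) :=
        sum_NJ_fiber _ _ hinner
      rw [h2] at h1
      have h3 : ∑ a ∈ Finset.range (k+2), ((k+1).choose a : ℝ) *
              ∑ b ∈ Finset.range (l+2), ((l+1).choose b : ℝ) *
                (if a + (l+1-b) = m then Fh x a b * (-1:ℝ)^(l+1-b) else 0)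
          = (-1:ℝ)^(l+1) * ∑ a ∈ Finset.range (k+2), ∑ b ∈ Finset.range (l+2),
            (if a + (l+1-b) = m then gd k l (Fh x) a b else 0) := by
        rw [Finset.mul_sum]
        refine Finset.sum_congr rfl (fun a _ => ?_)
        rw [Finset.mul_sum, Finset.mul_sum]
        refine Finset.sum_congr rfl (fun b hb => ?_)
        simp only [Finset.mem_range] at hb
        by_cases hc : a + (l+1-b) = m
        · rw [if_pos hc, if_pos hc]
          rw [neg_one_pow_sub (show b ≤ l+1 by omega)]
          simp only [gd]
          ring
        · rw [if_neg hc, if_neg hc]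
          ring
      rw [h3] at h1
      rcases mul_eq_zero.mp h1 with h | h
      · exact absurd h (pow_ne_zero _ (by norm_num))
      · exact h
    have hkey := key_eq k l (Fh x) hD (NJ I) (NJ J) (NJ_le I) (NJ_le J)
    have hlam := lam_count (wrec k l (Fh x)) I J
    rw [Fcount I J, hlam, hkey]
    have hk1 : ((k:ℝ)+1) ≠ 0 := by positivity
    have hl1 : ((l:ℝ)+1) ≠ 0 := by positivity
    field_simp


end MRT
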